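/- arXiv:1603.01921 — 3 statements merged into one kernel-verified Lean document; each statement's English description precedes it below -/
import Mathlib

section
/- For α > 0, s > 0, and 0 ≤ x, the integral identity ∫₀ˣ (1/(1 + s·u^{−α})) · 2u du = x² − x² · ₂F₁(1, 2/α; 1 + 2/α; −x^α/s) holds, where ₂F₁ is the Gauss hypergeometric function. -/
/-!
Substituting `u = x t^{1/α}` turns the left-hand side into
`x² b ∫₀¹ t^{b-1} (1 - 1/(1 + c t)) dt` with `b = 2/α` and `c = x^α / s`. In Euler's integral for
`₂F₁(1, b; 1 + b; -c)` the Gamma prefactor collapses to `b` and the integrand to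
`t^{b-1} / (1 + c t)`, and since `b ∫₀¹ t^{b-1} dt = 1` this gives the same expression for
`1 - ₂F₁(1, b; 1 + b; -c)`.
-/

open Real

/-- The Gauss hypergeometric function `₂F₁(a, b; c; z)`, defined via the Euler integral
representation (valid for `c > b > 0` and `z < 1`, and agreeing with the analytic
continuation of the series `∑_{k≥0} (a)_k (b)_k / (c)_k · z^k/k!` there). -/
noncomputable def gaussHyp2F1 (a b c z : ℝ) : ℝ :=
  (Real.Gamma c / (Real.Gamma b * Real.Gamma (c - b))) *
    ∫ t in (0 : ℝ)..1, t ^ (b - 1) * (1 - t) ^ (c - b - 1) * (1 - z * t) ^ (-a)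

open Set MeasureTheory intervalIntegral

theorem integral_comp_rpow_mul_deriv {p : ℝ} (hp : 0 < p) {g : ℝ → ℝ}
    (hg : ContinuousOn g (Icc 0 1)) :
    ∫ t in (0 : ℝ)..1, g (t ^ p) * (p * t ^ (p - 1)) = ∫ u in (0 : ℝ)..1, g u := by
  have hmaps : MapsTo (· ^ p) (Icc (0 : ℝ) 1) (Icc 0 1) := fun t ht =>
    ⟨rpow_nonneg ht.1 p, rpow_le_one ht.1 ht.2 hp.le⟩
  have hpow : ContinuousOn (· ^ p) (Icc (0 : ℝ) 1) := (continuous_rpow_const hp.le).continuousOn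
  have hint : IntervalIntegrable (fun t => g (t ^ p) * (p * t ^ (p - 1))) volume 0 1 :=
    ((intervalIntegrable_rpow' (by linarith)).const_mul p).continuousOn_mul
      (by rw [uIcc_of_le zero_le_one]; exact hg.comp hpow hmaps)
  have hsub := integral_comp_mul_deriv''' (f := (· ^ p)) (f' := fun t => p * t ^ (p - 1)) (g := g)
    (by rw [uIcc_of_le zero_le_one]; exact hpow)
    (fun t ht => by
      simp only [zero_le_one, min_eq_left, max_eq_right] at ht
      exact (hasDerivAt_rpow_const (Or.inl ht.1.ne')).hasDerivWithinAt)
    (hg.mono <| by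
      simpa using (hmaps.mono_left Ioo_subset_Icc_self).image_subset)
    (by rw [uIcc_of_le zero_le_one]; exact hg.integrableOn_Icc.mono_set hmaps.image_subset)
    ((intervalIntegrable_iff' (by finiteness)).1 hint)
  simpa [zero_rpow hp.ne'] using hsub

theorem gaussHyp2F1_one_left {b : ℝ} (hb : 0 < b) (z : ℝ) :
    gaussHyp2F1 1 b (1 + b) z = b * ∫ t in (0 : ℝ)..1, t ^ (b - 1) * (1 - z * t)⁻¹ := by
  have hΓ : Gamma (1 + b) = b * Gamma b := by rw [add_comm, Gamma_add_one hb.ne']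
  simp only [gaussHyp2F1, add_sub_cancel_right, sub_self, rpow_zero, mul_one, Gamma_one, hΓ,
    rpow_neg_one]
  field_simp [(Gamma_pos_of_pos hb).ne']

theorem one_sub_gaussHyp2F1_one_left {b z : ℝ} (hb : 0 < b) (hz : z < 1) :
    1 - gaussHyp2F1 1 b (1 + b) z =
      b * ∫ t in (0 : ℝ)..1, t ^ (b - 1) * (1 - (1 - z * t)⁻¹) := by
  have hpow : IntervalIntegrable (fun t : ℝ => t ^ (b - 1)) volume 0 1 :=
    intervalIntegrable_rpow' (by linarith)
  have hcont : ContinuousOn (fun t : ℝ => (1 - z * t)⁻¹) (uIcc 0 1) := by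
    refine ContinuousOn.inv₀ (by fun_prop) fun t ht => ?_
    rw [uIcc_of_le zero_le_one] at ht
    nlinarith [ht.1, ht.2, mul_nonneg ht.1 (sub_nonneg.2 hz.le)]
  have hpow_int : ∫ t in (0 : ℝ)..1, t ^ (b - 1) = 1 / b := by
    rw [integral_rpow (Or.inl (by linarith))]
    simp [zero_rpow hb.ne']
  simp only [mul_sub, mul_one]
  rw [integral_sub hpow (hpow.mul_continuousOn hcont), hpow_int, gaussHyp2F1_one_left hb,
    mul_sub, mul_one_div_cancel hb.ne']

theorem integral_one_div_one_add_mul_rpow_neg_mul {α s x : ℝ} (hα : 0 < α) (hs : 0 < s)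
    (hx : 0 ≤ x) :
    ∫ u in (0 : ℝ)..x, (1 / (1 + s * u ^ (-α))) * (2 * u) =
      x ^ 2 * (2 / α * ∫ t in (0 : ℝ)..1, t ^ (2 / α - 1) * (1 - (1 + x ^ α / s * t)⁻¹)) := by
  set ψ : ℝ → ℝ := fun u => u ^ α / (u ^ α + s) * (2 * u)
  have hψ : ∀ u ∈ uIcc 0 x, (1 / (1 + s * u ^ (-α))) * (2 * u) = ψ u := by
    intro u hu
    rw [uIcc_of_le hx] at hu
    rcases hu.1.eq_or_lt with rfl | hu0
    · simp [ψ]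
    · simp only [ψ, rpow_neg hu0.le]
      field_simp
  have hψ_cont : ContinuousOn (fun t => ψ (x * t)) (Icc 0 1) := by
    have := continuous_rpow_const hα.le
    refine ContinuousOn.mul (ContinuousOn.div (by fun_prop) (by fun_prop) fun t ht => ?_)
      (by fun_prop)
    have := mul_nonneg hx ht.1
    positivity
  have hψ_subst : ∀ t ∈ uIcc (0 : ℝ) 1, ψ (x * t ^ (1 / α)) * (1 / α * t ^ (1 / α - 1)) =
      x * (2 / α * (t ^ (2 / α - 1) * (1 - (1 + x ^ α / s * t)⁻¹))) := by
    intro t ht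
    rw [uIcc_of_le zero_le_one] at ht
    rcases ht.1.eq_or_lt with rfl | ht0
    · simp [ψ, zero_rpow (inv_pos.2 hα).ne']
    · have hpow : (x * t ^ (1 / α)) ^ α = x ^ α * t := by
        rw [mul_rpow hx (rpow_nonneg ht.1 _), ← rpow_mul ht.1, one_div_mul_cancel hα.ne', rpow_one]
      have hexp : t ^ (1 / α) * t ^ (1 / α - 1) = t ^ (2 / α - 1) := by
        rw [← rpow_add ht0]; ring_nf
      have : 0 ≤ x ^ α * t := mul_nonneg (rpow_nonneg hx α) ht.1
      simp only [ψ, hpow, ← hexp]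
      field_simp
      ring
  calc ∫ u in (0 : ℝ)..x, (1 / (1 + s * u ^ (-α))) * (2 * u)
      = x * ∫ t in (0 : ℝ)..1, ψ (x * t) := by
        rw [integral_congr hψ, ← smul_eq_mul, smul_integral_comp_mul_left, mul_zero, mul_one]
    _ = x * ∫ t in (0 : ℝ)..1, ψ (x * t ^ (1 / α)) * (1 / α * t ^ (1 / α - 1)) := by
        rw [integral_comp_rpow_mul_deriv (by positivity) hψ_cont]
    _ = _ := by
        rw [integral_congr hψ_subst, intervalIntegral.integral_const_mul,
          intervalIntegral.integral_const_mul]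
        ring

/-- For `α > 0`, `s > 0`, and `x ≥ 0`, one has
`∫₀ˣ (1/(1 + s·u^{−α})) · 2u du = x² − x² · ₂F₁(1, 2/α; 1 + 2/α; −x^α/s)`. -/
theorem stmt6 (α s x : ℝ) (hα : 0 < α) (hs : 0 < s) (hx : 0 ≤ x) :
    ∫ u in (0 : ℝ)..x, (1 / (1 + s * u ^ (-α))) * (2 * u) =
      x ^ 2 - x ^ 2 * gaussHyp2F1 1 (2 / α) (1 + 2 / α) (-(x ^ α / s)) := by
  have hz : -(x ^ α / s) < 1 := by
    have := div_nonneg (rpow_nonneg hx α) hs.le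
    linarith
  calc ∫ u in (0 : ℝ)..x, (1 / (1 + s * u ^ (-α))) * (2 * u)
      = x ^ 2 * (1 - gaussHyp2F1 1 (2 / α) (1 + 2 / α) (-(x ^ α / s))) := by
        rw [one_sub_gaussHyp2F1_one_left (by positivity) hz]
        simpa only [neg_mul, sub_neg_eq_add] using
          integral_one_div_one_add_mul_rpow_neg_mul hα hs hx
    _ = _ := by ring
end

section
/- For α = 4 and s = β r⁴ with β > 0, one has ∫₀ʳ (1/(1 + β r⁴ u^{−4})) · (2u/r²) du = 1 − √β · arctan(1/√β). In particular, this value is independent of r. -/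
open Real

/-! Pulling `u⁴` out of the Laplace factor turns the integrand into `2u⁵ / (r² (u⁴ + β r⁴))`, and
`u² - a · arctan (u² / a)` is an antiderivative of `2u⁵ / (u⁴ + a²)`; with `a = √β r²` the
fundamental theorem of calculus gives the value, in which `r` cancels. -/

theorem one_div_one_add_mul_zpow_neg_four_mul (s u : ℝ) :
    1 / (1 + s * u ^ (-4 : ℤ)) * u = u ^ 5 / (u ^ 4 + s) := by
  rcases eq_or_ne u 0 with rfl | hu
  · simp
  have hu4 : u ^ 4 ≠ 0 := pow_ne_zero 4 hu
  have hfactor : 1 + s * u ^ (-4 : ℤ) = (u ^ 4 + s) / u ^ 4 := by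
    rw [zpow_neg, zpow_ofNat]
    field_simp
  rw [hfactor, one_div_div]
  ring

theorem hasDerivAt_sq_sub_mul_arctan_sq_div {a : ℝ} (ha : a ≠ 0) (u : ℝ) :
    HasDerivAt (fun u => u ^ 2 - a * arctan (u ^ 2 / a)) (2 * u ^ 5 / (u ^ 4 + a ^ 2)) u := by
  have hsq : HasDerivAt (fun u : ℝ => u ^ 2) (2 * u) u := by
    simpa using hasDerivAt_pow 2 u
  have harctan := ((hsq.div_const a).arctan).const_mul a
  refine (hsq.sub harctan).congr_deriv ?_
  have hden : u ^ 4 + a ^ 2 ≠ 0 := by positivity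
  field_simp
  ring

theorem integral_two_mul_pow_five_div {a : ℝ} (ha : a ≠ 0) (t : ℝ) :
    ∫ u in (0 : ℝ)..t, 2 * u ^ 5 / (u ^ 4 + a ^ 2) = t ^ 2 - a * arctan (t ^ 2 / a) := by
  have hcont : Continuous fun u : ℝ => 2 * u ^ 5 / (u ^ 4 + a ^ 2) :=
    by fun_prop (disch := intro u; positivity)
  rw [intervalIntegral.integral_eq_sub_of_hasDerivAt
    (fun u _ => hasDerivAt_sq_sub_mul_arctan_sq_div ha u) (hcont.intervalIntegrable 0 t)]
  simp

/-- For `α = 4` and `s = β r⁴` with `β > 0` and `r > 0`,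
`∫₀ʳ (1/(1 + β r⁴ u^{−4})) · (2u/r²) du = 1 − √β · arctan(1/√β)`; in particular the value
is independent of `r`. -/
theorem stmt7 (β r : ℝ) (hβ : 0 < β) (hr : 0 < r) :
    ∫ u in (0 : ℝ)..r, (1 / (1 + β * r ^ 4 * u ^ (-4 : ℤ))) * (2 * u / r ^ 2) =
      1 - Real.sqrt β * Real.arctan (1 / Real.sqrt β) := by
  set a := √β * r ^ 2 with ha_def
  have ha : a ≠ 0 := by positivity
  have ha_sq : a ^ 2 = β * r ^ 4 := by rw [mul_pow, sq_sqrt hβ.le]; ring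
  have hintegrand : ∀ u : ℝ, 1 / (1 + β * r ^ 4 * u ^ (-4 : ℤ)) * (2 * u / r ^ 2) =
      2 * u ^ 5 / (u ^ 4 + a ^ 2) / r ^ 2 := fun u => by
    rw [ha_sq]
    linear_combination (2 / r ^ 2) * one_div_one_add_mul_zpow_neg_four_mul (β * r ^ 4) u
  simp only [hintegrand, intervalIntegral.integral_div, integral_two_mul_pow_five_div ha]
  have hr2 : r ^ 2 ≠ 0 := by positivity
  rw [ha_def, div_mul_cancel_right₀ hr2]
  field_simp
end

section
/- With N^a − 1 interferers each independently being 'inner' (distance density 2u/r² on (0,r)) with probability p and 'outer' (density 2u/(r_d²−r²) on (r, r_d)) with probability 1−p, truncated so that the number of inner interferers is at most n_m = min(k−1, N^a−1), the Laplace transform of the total interference I = ∑ h_i U_i^{−α} at s equals ∑_{ℓ=0}^{n_m} ξ(p, ℓ) · (C(α,s,r)/r²)^ℓ · ((C(α,s,r_d) − C(α,s,r))/(r_d² − r²))^{N^a−1−ℓ}, where ξ(p,ℓ) = p^ℓ(1−p)^{N^a−1−ℓ} C(N^a−1, ℓ) / ∑_{j=0}^{n_m} p^j(1−p)^{N^a−1−j}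 C(N^a−1, j) and C(α,s,x) = ∫₀ˣ 2u/(1+s u^{−α}) du. -/
/-!
Given how many interferers are inner, the interference is a sum of independent terms
`h U^{-α}`, so `exp (-s I)` factorizes and its expectation is a product of single-interferer
Laplace transforms. Averaging `exp (-s h u^{-α})` over `h ~ Exp(1)` gives `1 / (1 + s u^{-α})`,
and integrating this against the radial density `2u/c` on `(a, b)` gives `(C b - C a) / c`.
-/

open MeasureTheory ProbabilityTheory Real Set

namespace ProbabilityTheory

/-- Exponential tilting: `e^{-cx}` times the `Exp(r)` density is `r/(r+c)` times the
`Exp(r+c)` density. -/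
lemma lintegral_exp_neg_mul_expMeasure {r c : ℝ} (hrc : 0 < r + c) :
    ∫⁻ x, ENNReal.ofReal (exp (-(c * x))) ∂expMeasure r = ENNReal.ofReal (r / (r + c)) := by
  have hpdf (r : ℝ) : Measurable (exponentialPDF r) :=
    (measurable_exponentialPDFReal r).ennreal_ofReal
  have htilt : exponentialPDF r * (fun x => ENNReal.ofReal (exp (-(c * x)))) =
      fun x => ENNReal.ofReal (r / (r + c)) * exponentialPDF (r + c) x := by
    funext x
    simp only [Pi.mul_apply, exponentialPDF_eq, ← ENNReal.ofReal_mul' (exp_pos _).le]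
    split_ifs
    · rw [← ENNReal.ofReal_mul' (by positivity), mul_assoc, ← exp_add]
      field_simp
      ring_nf
    · simp
  rw [show expMeasure r = volume.withDensity (exponentialPDF r) from rfl,
    lintegral_withDensity_eq_lintegral_mul _ (hpdf r) (by fun_prop), htilt,
    lintegral_const_mul _ (hpdf _), lintegral_exponentialPDF_eq_one hrc, mul_one]

lemma integral_exp_neg_mul_prod_expMeasure {r : ℝ} (hr : 0 < r) (ν : Measure ℝ) [SFinite ν]
    {g : ℝ → ℝ} (hg : Measurable g) (hg0 : ∀ᵐ u ∂ν, 0 ≤ g u) :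
    ∫ y, exp (-(g y.1 * y.2)) ∂(ν.prod (expMeasure r)) = ∫ u, r / (r + g u) ∂ν := by
  have := isProbabilityMeasure_expMeasure hr
  rw [integral_eq_lintegral_of_nonneg_ae (ae_of_all _ fun _ => (exp_pos _).le) (by fun_prop),
    integral_eq_lintegral_of_nonneg_ae (hg0.mono fun u hu => by positivity)
      ((hg.const_add r).const_div r).aestronglyMeasurable,
    lintegral_prod _ (by fun_prop)]
  exact congrArg ENNReal.toReal <| lintegral_congr_ae <|
    hg0.mono fun u hu => lintegral_exp_neg_mul_expMeasure (c := g u) (by linarith)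

end ProbabilityTheory

namespace MeasureTheory

lemma sigmaFinite_withDensity_indicator_ofReal {α : Type*} [MeasurableSpace α] (μ : Measure α)
    [SigmaFinite μ] (S : Set α) (f : α → ℝ) :
    SigmaFinite (μ.withDensity fun u => S.indicator (fun u => ENNReal.ofReal (f u)) u) :=
  SigmaFinite.withDensity_of_ne_top' fun u => by
    by_cases hu : u ∈ S <;> simp [hu]

lemma integral_withDensity_indicator_Ioo {a b : ℝ} (hab : a ≤ b) {ρ : ℝ → ℝ}
    (hρ : Measurable ρ) (hρ0 : ∀ u ∈ Ioo a b, 0 ≤ ρ u) (φ : ℝ → ℝ) :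
    ∫ u, φ u ∂(volume.withDensity fun u => (Ioo a b).indicator (fun u => ENNReal.ofReal (ρ u)) u) =
      ∫ u in a..b, ρ u * φ u := by
  rw [withDensity_indicator measurableSet_Ioo, integral_withDensity_eq_integral_toReal_smul
    hρ.ennreal_ofReal (ae_of_all _ fun _ => ENNReal.ofReal_lt_top),
    intervalIntegral.integral_of_le hab, integral_Ioc_eq_integral_Ioo]
  refine setIntegral_congr_fun measurableSet_Ioo fun u hu => ?_
  simp [ENNReal.toReal_ofReal (hρ0 u hu)]

lemma integral_prod_pi_prod_mul_prod {E 𝕜 ι κ : Type*} [RCLike 𝕜] [MeasurableSpace E]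
    [Fintype ι] [Fintype κ] (μ ν : Measure E) [SigmaFinite μ] [SigmaFinite ν] (f g : E → 𝕜) :
    ∫ x : (ι → E) × (κ → E), (∏ i, f (x.1 i)) * ∏ j, g (x.2 j)
        ∂((Measure.pi fun _ => μ).prod (Measure.pi fun _ => ν)) =
      (∫ y, f y ∂μ) ^ Fintype.card ι * (∫ y, g y ∂ν) ^ Fintype.card κ := by
  rw [integral_prod_mul (fun x : ι → E => ∏ i, f (x i)) (fun x : κ → E => ∏ j, g (x j)),
    integral_fintype_prod_eq_pow, integral_fintype_prod_eq_pow]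

end MeasureTheory

lemma intervalIntegrable_two_mul_div_one_add_mul_rpow {s : ℝ} (hs : 0 ≤ s) (α : ℝ) {x y : ℝ}
    (hx : 0 ≤ x) (hy : 0 ≤ y) :
    IntervalIntegrable (fun u => 2 * u / (1 + s * u ^ (-α))) volume x y := by
  refine ((continuous_const_mul (2 : ℝ)).intervalIntegrable x y).mono_fun'
    ((measurable_id.const_mul 2).div
      (((measurable_id.pow_const (-α)).const_mul s).const_add 1)).aestronglyMeasurable
    ((ae_restrict_iff' measurableSet_uIoc).2 (ae_of_all _ fun u hu => ?_))
  have hu : 0 ≤ u := (le_min hx hy).trans hu.1.le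
  have : 0 ≤ s * u ^ (-α) := by positivity
  dsimp only
  rw [norm_of_nonneg (by positivity)]
  exact div_le_self (by positivity) (by linarith)

lemma integral_exp_neg_mul_rpow_prod_expMeasure (α : ℝ) {s a b c : ℝ} (hs : 0 ≤ s)
    (ha : 0 ≤ a) (hab : a ≤ b) (hc : 0 ≤ c) :
    ∫ y : ℝ × ℝ, exp (-s * (y.2 * y.1 ^ (-α)))
        ∂((volume.withDensity fun u =>
          (Ioo a b).indicator (fun u => ENNReal.ofReal (2 * u / c)) u).prod (expMeasure 1)) =
      (∫ u in a..b, 2 * u / (1 + s * u ^ (-α))) / c := by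
  set ν : Measure ℝ := volume.withDensity fun u =>
    (Ioo a b).indicator (fun u => ENNReal.ofReal (2 * u / c)) u
  have hsupp : ∀ᵐ u ∂ν, 0 ≤ s * u ^ (-α) := by
    rw [ae_withDensity_iff (by measurability)]
    refine ae_of_all _ fun u hu => ?_
    have : 0 ≤ u := ha.trans (mem_of_indicator_ne_zero hu).1.le
    positivity
  calc _ = ∫ y : ℝ × ℝ, exp (-(s * y.1 ^ (-α) * y.2)) ∂(ν.prod (expMeasure 1)) := by
        congr with y
        ring_nf
    _ = ∫ u in a..b, 2 * u / c * (1 / (1 + s * u ^ (-α))) := by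
        rw [integral_exp_neg_mul_prod_expMeasure one_pos _ (by fun_prop) hsupp,
          integral_withDensity_indicator_Ioo hab (by fun_prop) fun u hu => ?_]
        have : 0 ≤ u := ha.trans hu.1.le
        positivity
    _ = _ := by
        rw [← intervalIntegral.integral_div]
        congr with u
        ring

theorem stmt10_general (Na : ℕ)
    (rd r : ℝ) (hr : 0 < r) (hrd : r < rd)
    (α : ℝ) (s : ℝ) (hs : 0 ≤ s)
    (nm : ℕ)
    (ξ : ℕ → ℝ)
    (C : ℝ → ℝ) (hC : ∀ x, C x = ∫ u in (0 : ℝ)..x, 2 * u / (1 + s * u ^ (-α)))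
    (μin μout : Measure ℝ)
    (hμin : μin = volume.withDensity fun u =>
      Set.indicator (Set.Ioo (0 : ℝ) r) (fun u => ENNReal.ofReal (2 * u / r ^ 2)) u)
    (hμout : μout = volume.withDensity fun u =>
      Set.indicator (Set.Ioo r rd) (fun u => ENNReal.ofReal (2 * u / (rd ^ 2 - r ^ 2))) u) :
    ∑ ℓ ∈ Finset.range (nm + 1), ξ ℓ *
      ∫ x : (Fin ℓ → ℝ × ℝ) × (Fin (Na - 1 - ℓ) → ℝ × ℝ),
        Real.exp (-s * ((∑ i, (x.1 i).2 * (x.1 i).1 ^ (-α)) +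
          ∑ j, (x.2 j).2 * (x.2 j).1 ^ (-α)))
        ∂((Measure.pi fun _ : Fin ℓ => μin.prod (expMeasure 1)).prod
          (Measure.pi fun _ : Fin (Na - 1 - ℓ) => μout.prod (expMeasure 1))) =
    ∑ ℓ ∈ Finset.range (nm + 1), ξ ℓ * (C r / r ^ 2) ^ ℓ *
      ((C rd - C r) / (rd ^ 2 - r ^ 2)) ^ (Na - 1 - ℓ) := by
  have := isProbabilityMeasure_expMeasure one_pos
  have : SigmaFinite μin := hμin ▸ sigmaFinite_withDensity_indicator_ofReal _ _ _
  have : SigmaFinite μout := hμout ▸ sigmaFinite_withDensity_indicator_ofReal _ _ _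
  have hin : ∫ y, exp (-s * (y.2 * y.1 ^ (-α))) ∂(μin.prod (expMeasure 1)) = C r / r ^ 2 := by
    rw [hμin, integral_exp_neg_mul_rpow_prod_expMeasure α hs le_rfl hr.le (by positivity), hC]
  have hout : ∫ y, exp (-s * (y.2 * y.1 ^ (-α))) ∂(μout.prod (expMeasure 1)) =
      (C rd - C r) / (rd ^ 2 - r ^ 2) := by
    have hint {x} (hx : 0 ≤ x) := intervalIntegrable_two_mul_div_one_add_mul_rpow hs α le_rfl hx
    rw [hμout, integral_exp_neg_mul_rpow_prod_expMeasure α hs hr.le hrd.le (by nlinarith), hC, hC,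
      intervalIntegral.integral_interval_sub_left (hint (hr.trans hrd).le) (hint hr.le)]
  refine Finset.sum_congr rfl fun ℓ _ => ?_
  simp_rw [mul_assoc, mul_add, exp_add, Finset.mul_sum, exp_sum]
  rw [integral_prod_pi_prod_mul_prod _ _ (fun y : ℝ × ℝ => exp (-s * (y.2 * y.1 ^ (-α))))
    (fun y : ℝ × ℝ => exp (-s * (y.2 * y.1 ^ (-α)))), hin, hout, Fintype.card_fin,
    Fintype.card_fin]

/-- With `N^a − 1` interferers, each independently `inner` (distance density
`2u/r²` on `(0,r)`) with probability `p = (k−1)/(N_t−1)` and `outer` (density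
`2u/(r_d²−r²)` on `(r, r_d)`) with probability `1−p`, the number of inner interferers being a
`Binomial(N^a−1, p)` truncated to be at most `n_m = min(k−1, N^a−1)`, and with i.i.d. `Exp(1)`
fading independent of everything, the Laplace transform of the total interference
`I = ∑ hᵢ Uᵢ^{−α}` at `s` (the mixture over the truncated-binomial count `ℓ` of the expectation
of `exp(−sI)` given `ℓ` inner and `N^a−1−ℓ` outer interferers) equals
`∑_{ℓ=0}^{n_m} ξ(p,ℓ) (C(α,s,r)/r²)^ℓ ((C(α,s,r_d) − C(α,s,r))/(r_d² − r²))^{N^a−1−ℓ}`,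
where `C(α,s,x) = ∫₀ˣ 2u/(1+s u^{−α}) du`. -/
theorem stmt10 (Nt Na k : ℕ) (hNt : 2 ≤ Nt) (hk1 : 1 ≤ k) (hkNt : k ≤ Nt)
    (hNa1 : 1 ≤ Na) (hNaNt : Na ≤ Nt)
    (rd r : ℝ) (hr : 0 < r) (hrd : r < rd)
    (α : ℝ) (hα : 0 < α) (s : ℝ) (hs : 0 ≤ s)
    (p : ℝ) (hp : p = ((k : ℝ) - 1) / ((Nt : ℝ) - 1))
    (nm : ℕ) (hnm : nm = min (k - 1) (Na - 1))
    (ξ : ℕ → ℝ)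
    (hξ : ∀ ℓ, ξ ℓ = p ^ ℓ * (1 - p) ^ (Na - 1 - ℓ) * (Na - 1).choose ℓ /
      ∑ j ∈ Finset.range (nm + 1), p ^ j * (1 - p) ^ (Na - 1 - j) * (Na - 1).choose j)
    (C : ℝ → ℝ) (hC : ∀ x, C x = ∫ u in (0 : ℝ)..x, 2 * u / (1 + s * u ^ (-α)))
    (μin μout : Measure ℝ)
    (hμin : μin = volume.withDensity fun u =>
      Set.indicator (Set.Ioo (0 : ℝ) r) (fun u => ENNReal.ofReal (2 * u / r ^ 2)) u)
    (hμout : μout = volume.withDensity fun u =>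
      Set.indicator (Set.Ioo r rd) (fun u => ENNReal.ofReal (2 * u / (rd ^ 2 - r ^ 2))) u) :
    ∑ ℓ ∈ Finset.range (nm + 1), ξ ℓ *
      ∫ x : (Fin ℓ → ℝ × ℝ) × (Fin (Na - 1 - ℓ) → ℝ × ℝ),
        Real.exp (-s * ((∑ i, (x.1 i).2 * (x.1 i).1 ^ (-α)) +
          ∑ j, (x.2 j).2 * (x.2 j).1 ^ (-α)))
        ∂((Measure.pi fun _ : Fin ℓ => μin.prod (expMeasure 1)).prod
          (Measure.pi fun _ : Fin (Na - 1 - ℓ) => μout.prod (expMeasure 1))) =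
    ∑ ℓ ∈ Finset.range (nm + 1), ξ ℓ * (C r / r ^ 2) ^ ℓ *
      ((C rd - C r) / (rd ^ 2 - r ^ 2)) ^ (Na - 1 - ℓ) :=
  stmt10_general Na rd r hr hrd α s hs nm ξ C hC μin μout hμin hμout
end
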